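/- arXiv:1506.06180 — 3 statements merged into one kernel-verified Lean document; each statement's English description precedes it below -/
import Mathlib

section
/- Let constants σ₀, β₀, μ₀, b₀ = μ₀ - σ₀²/2, c₀, λ₀, ρ, x̄, ȳ ∈ ℝ be given. Define on smooth functions u(t, x, y, z) on ℝ⁴ the constant-coefficient operator ℋ := ∂_t + (1/2)σ₀² ∂_x² + ρσ₀β₀ ∂_x∂_y + (1/2)β₀² ∂_y² + b₀ ∂_x + c₀ ∂_y + (1/2)λ₀² ∂_z² + ρβ₀λ₀ ∂_y∂_z + μ₀ ∂_x∂_z, the first-order operators ℒ_X := (μ₀ - σ₀²/2) I + σ₀² ∂_x + ρσ₀β₀ ∂_y + μ₀ ∂_z and ℒ_Y := c₀ I + β₀² ∂_y + ρσ₀β₀ ∂_x + ρβ₀λ₀ ∂_z, and for s ∈ ℝ the operators (ℳ_X(s) u)(t,x,y,z) := (x - x̄) u(t,x,y,z) + (s - t)(ℒ_X u)(t,x,y,z) and (ℳ_Y(s) u)(t,x,y,z) := (y - ȳ) u(t,x,y,z) + (s - t)(ℒ_Y u)(t,x,y,z). If v is a smooth function with ℋ v = 0 everywhere, then for all nonnegative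 integers k, l and every s ∈ ℝ, ℋ (ℳ_X(s)^k ℳ_Y(s)^l v) = 0. -/
noncomputable section

/-- Functions of `(t, x, y, z)`. -/
abbrev R4 := ℝ → ℝ → ℝ → ℝ → ℝ

def d4T (F : R4) : R4 := fun t x y z => deriv (fun s => F s x y z) t
def d4X (F : R4) : R4 := fun t x y z => deriv (fun u => F t u y z) x
def d4Y (F : R4) : R4 := fun t x y z => deriv (fun u => F t x u z) y
def d4Z (F : R4) : R4 := fun t x y z => deriv (fun u => F t x y u) z

/-- The constant-coefficient parabolic operator `ℋ = ∂_t + 𝒜₀ + 𝒞₀`. -/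
def Hop (σ0 β0 b0 c0 lam0 ρ μ0 : ℝ) (F : R4) : R4 := fun t x y z =>
  d4T F t x y z
  + (1/2) * σ0^2 * d4X (d4X F) t x y z
  + ρ * σ0 * β0 * d4X (d4Y F) t x y z
  + (1/2) * β0^2 * d4Y (d4Y F) t x y z
  + b0 * d4X F t x y z
  + c0 * d4Y F t x y z
  + (1/2) * lam0^2 * d4Z (d4Z F) t x y z
  + ρ * β0 * lam0 * d4Y (d4Z F) t x y z
  + μ0 * d4X (d4Z F) t x y z

/-- The first-order operator `ℒ_X = (μ₀ - σ₀²/2) I + σ₀² ∂_x + ρσ₀β₀ ∂_y + μ₀ ∂_z`. -/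
def LXop (σ0 β0 μ0 ρ : ℝ) (F : R4) : R4 := fun t x y z =>
  (μ0 - σ0^2/2) * F t x y z + σ0^2 * d4X F t x y z
  + ρ * σ0 * β0 * d4Y F t x y z + μ0 * d4Z F t x y z

/-- The first-order operator `ℒ_Y = c₀ I + β₀² ∂_y + ρσ₀β₀ ∂_x + ρβ₀λ₀ ∂_z`. -/
def LYop (σ0 β0 c0 lam0 ρ : ℝ) (F : R4) : R4 := fun t x y z =>
  c0 * F t x y z + β0^2 * d4Y F t x y z
  + ρ * σ0 * β0 * d4X F t x y z + ρ * β0 * lam0 * d4Z F t x y z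

/-- `ℳ_X(s) = (x - x̄) I + (s - t) ℒ_X`. -/
def MXop (σ0 β0 μ0 ρ xbar s : ℝ) (F : R4) : R4 := fun t x y z =>
  (x - xbar) * F t x y z + (s - t) * LXop σ0 β0 μ0 ρ F t x y z

/-- `ℳ_Y(s) = (y - ȳ) I + (s - t) ℒ_Y`. -/
def MYop (σ0 β0 c0 lam0 ρ ybar s : ℝ) (F : R4) : R4 := fun t x y z =>
  (y - ybar) * F t x y z + (s - t) * LYop σ0 β0 c0 lam0 ρ F t x y z

/-!
`ℋ` has constant coefficients, so it commutes with every directional derivative, and for an affine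
function `g` the commutator `[ℋ, g]` is a first-order operator `ℒ_g` with constant coefficients;
for `g = s - t` it is `-1`. Hence `ℳ = g + (s - t) ℒ_g` commutes with `ℋ`:
`ℋ ℳ u = g ℋ u + ℒ_g u + (s - t) ℒ_g ℋ u - ℒ_g u = ℳ ℋ u`.
Both `ℳ_X(s)` and `ℳ_Y(s)` have this form (`g = x - x̄`, resp. `y - ȳ`; the relation
`b₀ = μ₀ - σ₀²/2` makes `ℒ_X` the commutator), so
`ℋ ℳ_X(s)^k ℳ_Y(s)^l v = ℳ_X(s)^k ℳ_Y(s)^l ℋ v = 0`.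
-/

theorem iterate_comm_of_invariant {α : Type*} (P : α → Prop) {H M : α → α}
    (hP : ∀ a, P a → P (M a)) (hHM : ∀ a, P a → H (M a) = M (H a)) {a : α} (ha : P a) (n : ℕ) :
    H (M^[n] a) = M^[n] (H a) := by
  induction n generalizing a with
  | zero => rfl
  | succ n ih =>
    rw [Function.iterate_succ_apply, Function.iterate_succ_apply, ih (hP a ha), hHM a ha]

section DirDeriv

variable {E : Type*} [NormedAddCommGroup E] [NormedSpace ℝ E] {f g : E → ℝ}

def dirDeriv (v : E) (f : E → ℝ) : E → ℝ := fun p => fderiv ℝ f p v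

@[fun_prop]
theorem ContDiff.dirDeriv (hf : ContDiff ℝ (⊤ : ℕ∞) f) (v : E) :
    ContDiff ℝ (⊤ : ℕ∞) (dirDeriv v f) :=
  (hf.fderiv_right le_rfl).clm_apply contDiff_const

theorem differentiable_dirDeriv (hf : ContDiff ℝ 2 f) (v : E) :
    Differentiable ℝ (dirDeriv v f) :=
  ((hf.fderiv_right (m := 1) le_rfl).clm_apply contDiff_const).differentiable one_ne_zero

theorem dirDeriv_zero (f : E → ℝ) : dirDeriv 0 f = 0 := by
  funext p
  simp [dirDeriv]

theorem dirDeriv_comm (hf : ContDiff ℝ 2 f) (v w : E) :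
    dirDeriv v (dirDeriv w f) = dirDeriv w (dirDeriv v f) := by
  have hdf : Differentiable ℝ (fderiv ℝ f) :=
    (hf.fderiv_right (m := 1) le_rfl).differentiable one_ne_zero
  have second (a b : E) : dirDeriv a (dirDeriv b f) = fun p => fderiv ℝ (fderiv ℝ f) p a b := by
    funext p
    change fderiv ℝ (fun q => fderiv ℝ f q b) p a = _
    simp [fderiv_clm_apply (hdf p) (differentiableAt_const b)]
  rw [second, second]
  exact funext fun p => hf.contDiffAt.isSymmSndFDerivAt (by simp) v w

theorem dirDeriv_add (hf : Differentiable ℝ f) (hg : Differentiable ℝ g) (v : E) :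
    dirDeriv v (fun p => f p + g p) = fun p => dirDeriv v f p + dirDeriv v g p := by
  funext p
  simp [dirDeriv, fderiv_fun_add (hf p) (hg p)]

theorem dirDeriv_const_mul (hf : Differentiable ℝ f) (c : ℝ) (v : E) :
    dirDeriv v (fun p => c * f p) = fun p => c * dirDeriv v f p := by
  funext p
  simp [dirDeriv, fderiv_const_mul (hf p)]

theorem dirDeriv_affine_mul (ℓ : E →L[ℝ] ℝ) (k : ℝ) (hf : Differentiable ℝ f) (v : E) :
    dirDeriv v (fun p => (ℓ p + k) * f p) = fun p => ℓ v * f p + (ℓ p + k) * dirDeriv v f p := by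
  funext p
  simp [dirDeriv, ((ℓ.hasFDerivAt.add_const k).fun_mul (hf p).hasFDerivAt).fderiv]
  ring

theorem dirDeriv_dirDeriv_affine_mul (ℓ : E →L[ℝ] ℝ) (k : ℝ) (hf : ContDiff ℝ 2 f) (v w : E) :
    dirDeriv v (dirDeriv w (fun p => (ℓ p + k) * f p)) = fun p =>
      ℓ w * dirDeriv v f p + ℓ v * dirDeriv w f p + (ℓ p + k) * dirDeriv v (dirDeriv w f) p := by
  have hf1 : Differentiable ℝ f := hf.differentiable two_ne_zero
  have hdf := differentiable_dirDeriv hf w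
  rw [dirDeriv_affine_mul ℓ k hf1,
    dirDeriv_add (f := fun p => ℓ w * f p) (by fun_prop) (by fun_prop),
    dirDeriv_const_mul hf1, dirDeriv_affine_mul ℓ k hdf]
  funext p
  ring

theorem deriv_comp_eq_dirDeriv {γ : ℝ → E} {v : E} {a : ℝ} (hf : DifferentiableAt ℝ f (γ a))
    (hγ : HasDerivAt γ v a) : deriv (fun u => f (γ u)) a = dirDeriv v f (γ a) :=
  (hf.hasFDerivAt.comp_hasDerivAt a hγ).deriv

def firstOrderOp (c : ℝ) (w : E) (f : E → ℝ) : E → ℝ := fun p => c * f p + dirDeriv w f p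

@[fun_prop]
theorem ContDiff.firstOrderOp (hf : ContDiff ℝ (⊤ : ℕ∞) f) (c : ℝ) (w : E) :
    ContDiff ℝ (⊤ : ℕ∞) (firstOrderOp c w f) := by
  unfold _root_.firstOrderOp
  fun_prop

end DirDeriv

section Coordinates

def eT : ℝ × ℝ × ℝ × ℝ := (1, 0, 0, 0)
def eX : ℝ × ℝ × ℝ × ℝ := (0, 1, 0, 0)
def eY : ℝ × ℝ × ℝ × ℝ := (0, 0, 1, 0)
def eZ : ℝ × ℝ × ℝ × ℝ := (0, 0, 0, 1)

theorem dirDeriv_coords (f : ℝ × ℝ × ℝ × ℝ → ℝ) (a b c d : ℝ) (p : ℝ × ℝ × ℝ × ℝ) :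
    dirDeriv (a, b, c, d) f p = a * dirDeriv eT f p + b * dirDeriv eX f p
      + c * dirDeriv eY f p + d * dirDeriv eZ f p := by
  have hv : ((a, b, c, d) : ℝ × ℝ × ℝ × ℝ) = a • eT + b • eX + c • eY + d • eZ := by
    simp [eT, eX, eY, eZ]
  simp only [dirDeriv, hv, map_add, map_smul, smul_eq_mul]

def coordT : (ℝ × ℝ × ℝ × ℝ) →L[ℝ] ℝ := ContinuousLinearMap.fst ℝ ℝ (ℝ × ℝ × ℝ)

def coordX : (ℝ × ℝ × ℝ × ℝ) →L[ℝ] ℝ :=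
  (ContinuousLinearMap.fst ℝ ℝ (ℝ × ℝ)).comp (ContinuousLinearMap.snd ℝ ℝ (ℝ × ℝ × ℝ))

def coordY : (ℝ × ℝ × ℝ × ℝ) →L[ℝ] ℝ :=
  (ContinuousLinearMap.fst ℝ ℝ ℝ).comp
    ((ContinuousLinearMap.snd ℝ ℝ (ℝ × ℝ)).comp (ContinuousLinearMap.snd ℝ ℝ (ℝ × ℝ × ℝ)))

end Coordinates

section HeatOperator

variable (σ0 β0 b0 c0 lam0 ρ μ0 : ℝ)

def heatOp (f : ℝ × ℝ × ℝ × ℝ → ℝ) : ℝ × ℝ × ℝ × ℝ → ℝ := fun p =>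
  dirDeriv eT f p
  + (1/2) * σ0^2 * dirDeriv eX (dirDeriv eX f) p
  + ρ * σ0 * β0 * dirDeriv eX (dirDeriv eY f) p
  + (1/2) * β0^2 * dirDeriv eY (dirDeriv eY f) p
  + b0 * dirDeriv eX f p
  + c0 * dirDeriv eY f p
  + (1/2) * lam0^2 * dirDeriv eZ (dirDeriv eZ f) p
  + ρ * β0 * lam0 * dirDeriv eY (dirDeriv eZ f) p
  + μ0 * dirDeriv eX (dirDeriv eZ f) p

/-- The diffusion matrix of `ℋ` applied to the spatial part of `ℓ`. -/
def diffusionDir (ℓ : (ℝ × ℝ × ℝ × ℝ) →L[ℝ] ℝ) : ℝ × ℝ × ℝ × ℝ :=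
  (0, σ0^2 * ℓ eX + ρ * σ0 * β0 * ℓ eY + μ0 * ℓ eZ,
    ρ * σ0 * β0 * ℓ eX + β0^2 * ℓ eY + ρ * β0 * lam0 * ℓ eZ,
    μ0 * ℓ eX + ρ * β0 * lam0 * ℓ eY + lam0^2 * ℓ eZ)

def heatCommutator (ℓ : (ℝ × ℝ × ℝ × ℝ) →L[ℝ] ℝ) :
    (ℝ × ℝ × ℝ × ℝ → ℝ) → ℝ × ℝ × ℝ × ℝ → ℝ :=
  firstOrderOp (ℓ eT + b0 * ℓ eX + c0 * ℓ eY) (diffusionDir σ0 β0 lam0 ρ μ0 ℓ)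

def mOp (ℓ : (ℝ × ℝ × ℝ × ℝ) →L[ℝ] ℝ) (k s : ℝ) (f : ℝ × ℝ × ℝ × ℝ → ℝ) :
    ℝ × ℝ × ℝ × ℝ → ℝ := fun p =>
  (ℓ p + k) * f p + (s - p.1) * heatCommutator σ0 β0 b0 c0 lam0 ρ μ0 ℓ f p

variable {σ0 β0 b0 c0 lam0 ρ μ0} {f g : ℝ × ℝ × ℝ × ℝ → ℝ}

@[fun_prop]
theorem ContDiff.heatOp (hf : ContDiff ℝ (⊤ : ℕ∞) f) :
    ContDiff ℝ (⊤ : ℕ∞) (heatOp σ0 β0 b0 c0 lam0 ρ μ0 f) := by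
  unfold _root_.heatOp
  fun_prop

@[fun_prop]
theorem ContDiff.mOp (hf : ContDiff ℝ (⊤ : ℕ∞) f) (ℓ : (ℝ × ℝ × ℝ × ℝ) →L[ℝ] ℝ) (k s : ℝ) :
    ContDiff ℝ (⊤ : ℕ∞) (mOp σ0 β0 b0 c0 lam0 ρ μ0 ℓ k s f) := by
  unfold _root_.mOp heatCommutator
  fun_prop

theorem heatOp_add (hf : ContDiff ℝ (⊤ : ℕ∞) f) (hg : ContDiff ℝ (⊤ : ℕ∞) g) :
    heatOp σ0 β0 b0 c0 lam0 ρ μ0 (fun p => f p + g p)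
      = fun p => heatOp σ0 β0 b0 c0 lam0 ρ μ0 f p + heatOp σ0 β0 b0 c0 lam0 ρ μ0 g p := by
  funext p
  simp (disch := fun_prop (disch := simp)) only [heatOp, dirDeriv_add]
  ring

theorem heatOp_const_mul (hf : ContDiff ℝ (⊤ : ℕ∞) f) (c : ℝ) :
    heatOp σ0 β0 b0 c0 lam0 ρ μ0 (fun p => c * f p)
      = fun p => c * heatOp σ0 β0 b0 c0 lam0 ρ μ0 f p := by
  funext p
  simp (disch := fun_prop (disch := simp)) only [heatOp, dirDeriv_const_mul]
  ring

theorem heatOp_dirDeriv (hf : ContDiff ℝ (⊤ : ℕ∞) f) (w : ℝ × ℝ × ℝ × ℝ) :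
    heatOp σ0 β0 b0 c0 lam0 ρ μ0 (dirDeriv w f) = dirDeriv w (heatOp σ0 β0 b0 c0 lam0 ρ μ0 f) := by
  have first (a : ℝ × ℝ × ℝ × ℝ) : dirDeriv a (dirDeriv w f) = dirDeriv w (dirDeriv a f) :=
    dirDeriv_comm (hf.of_le (by norm_cast)) a w
  have second (a b : ℝ × ℝ × ℝ × ℝ) :
      dirDeriv a (dirDeriv w (dirDeriv b f)) = dirDeriv w (dirDeriv a (dirDeriv b f)) :=
    dirDeriv_comm ((hf.dirDeriv b).of_le (by norm_cast)) a w
  unfold heatOp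
  simp (disch := fun_prop (disch := simp)) only [dirDeriv_add, dirDeriv_const_mul, first, second]

theorem heatOp_firstOrderOp (hf : ContDiff ℝ (⊤ : ℕ∞) f) (c : ℝ) (w : ℝ × ℝ × ℝ × ℝ) :
    heatOp σ0 β0 b0 c0 lam0 ρ μ0 (firstOrderOp c w f)
      = firstOrderOp c w (heatOp σ0 β0 b0 c0 lam0 ρ μ0 f) := by
  change heatOp σ0 β0 b0 c0 lam0 ρ μ0 (fun p => c * f p + dirDeriv w f p) = _
  rw [heatOp_add (by fun_prop) (by fun_prop), heatOp_const_mul hf, heatOp_dirDeriv hf]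
  rfl

theorem heatOp_affine_mul (ℓ : (ℝ × ℝ × ℝ × ℝ) →L[ℝ] ℝ) (k : ℝ) (hf : ContDiff ℝ 2 f) :
    heatOp σ0 β0 b0 c0 lam0 ρ μ0 (fun p => (ℓ p + k) * f p)
      = fun p => (ℓ p + k) * heatOp σ0 β0 b0 c0 lam0 ρ μ0 f p
        + heatCommutator σ0 β0 b0 c0 lam0 ρ μ0 ℓ f p := by
  funext p
  simp only [heatOp, heatCommutator, firstOrderOp, diffusionDir, dirDeriv_coords,
    ↓dirDeriv_dirDeriv_affine_mul ℓ k hf, dirDeriv_affine_mul ℓ k (hf.differentiable two_ne_zero)]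
  ring

theorem heatOp_time_mul (s : ℝ) (hf : ContDiff ℝ 2 f) :
    heatOp σ0 β0 b0 c0 lam0 ρ μ0 (fun p => (s - p.1) * f p)
      = fun p => (s - p.1) * heatOp σ0 β0 b0 c0 lam0 ρ μ0 f p - f p := by
  have h_affine :
      (fun p : ℝ × ℝ × ℝ × ℝ => (s - p.1) * f p) = fun p => ((-coordT) p + s) * f p := by
    simp [coordT, neg_add_eq_sub]
  rw [h_affine, heatOp_affine_mul _ _ hf]
  funext p
  simp [heatCommutator, firstOrderOp, diffusionDir, coordT, eT, eX, eY, eZ, Prod.mk_zero_zero,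
    dirDeriv_zero]
  ring

theorem heatOp_mOp (hf : ContDiff ℝ (⊤ : ℕ∞) f) (ℓ : (ℝ × ℝ × ℝ × ℝ) →L[ℝ] ℝ) (k s : ℝ) :
    heatOp σ0 β0 b0 c0 lam0 ρ μ0 (mOp σ0 β0 b0 c0 lam0 ρ μ0 ℓ k s f)
      = mOp σ0 β0 b0 c0 lam0 ρ μ0 ℓ k s (heatOp σ0 β0 b0 c0 lam0 ρ μ0 f) := by
  have hL : ContDiff ℝ (⊤ : ℕ∞) (heatCommutator σ0 β0 b0 c0 lam0 ρ μ0 ℓ f) :=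
    hf.firstOrderOp _ _
  unfold mOp
  rw [heatOp_add (by fun_prop) (by fun_prop), heatOp_affine_mul _ _ (hf.of_le (by norm_cast)),
    heatOp_time_mul _ (hL.of_le (by norm_cast)), heatCommutator, heatOp_firstOrderOp hf]
  funext p
  ring

end HeatOperator

section Uncurry

def uncurry4 (F : R4) : ℝ × ℝ × ℝ × ℝ → ℝ := fun p => F p.1 p.2.1 p.2.2.1 p.2.2.2

theorem uncurry4_injective : Function.Injective uncurry4 := fun _ _ h =>
  funext fun t => funext fun x => funext fun y => funext fun z => congrFun h (t, x, y, z)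

variable {σ0 β0 b0 c0 lam0 ρ μ0 : ℝ} {F : R4}

theorem d4T_apply (hF : Differentiable ℝ (uncurry4 F)) (t x y z : ℝ) :
    d4T F t x y z = dirDeriv eT (uncurry4 F) (t, x, y, z) :=
  deriv_comp_eq_dirDeriv (hF _) ((hasDerivAt_id t).prodMk (hasDerivAt_const t (x, y, z)))

theorem d4X_apply (hF : Differentiable ℝ (uncurry4 F)) (t x y z : ℝ) :
    d4X F t x y z = dirDeriv eX (uncurry4 F) (t, x, y, z) :=
  deriv_comp_eq_dirDeriv (hF _) ((hasDerivAt_const x t).prodMk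
    ((hasDerivAt_id x).prodMk (hasDerivAt_const x (y, z))))

theorem d4Y_apply (hF : Differentiable ℝ (uncurry4 F)) (t x y z : ℝ) :
    d4Y F t x y z = dirDeriv eY (uncurry4 F) (t, x, y, z) :=
  deriv_comp_eq_dirDeriv (hF _) ((hasDerivAt_const y t).prodMk ((hasDerivAt_const y x).prodMk
    ((hasDerivAt_id y).prodMk (hasDerivAt_const y z))))

theorem d4Z_apply (hF : Differentiable ℝ (uncurry4 F)) (t x y z : ℝ) :
    d4Z F t x y z = dirDeriv eZ (uncurry4 F) (t, x, y, z) :=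
  deriv_comp_eq_dirDeriv (hF _) ((hasDerivAt_const z t).prodMk ((hasDerivAt_const z x).prodMk
    ((hasDerivAt_const z y).prodMk (hasDerivAt_id z))))

theorem uncurry4_Hop (hF : ContDiff ℝ (⊤ : ℕ∞) (uncurry4 F)) :
    uncurry4 (Hop σ0 β0 b0 c0 lam0 ρ μ0 F) = heatOp σ0 β0 b0 c0 lam0 ρ μ0 (uncurry4 F) := by
  have hd : Differentiable ℝ (uncurry4 F) := hF.differentiable (by simp)
  have hX : uncurry4 (d4X F) = dirDeriv eX (uncurry4 F) := funext fun _ => d4X_apply hd _ _ _ _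
  have hY : uncurry4 (d4Y F) = dirDeriv eY (uncurry4 F) := funext fun _ => d4Y_apply hd _ _ _ _
  have hZ : uncurry4 (d4Z F) = dirDeriv eZ (uncurry4 F) := funext fun _ => d4Z_apply hd _ _ _ _
  have hdX : Differentiable ℝ (uncurry4 (d4X F)) := hX ▸ (hF.dirDeriv eX).differentiable (by simp)
  have hdY : Differentiable ℝ (uncurry4 (d4Y F)) := hY ▸ (hF.dirDeriv eY).differentiable (by simp)
  have hdZ : Differentiable ℝ (uncurry4 (d4Z F)) := hZ ▸ (hF.dirDeriv eZ).differentiable (by simp)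
  funext ⟨t, x, y, z⟩
  simp only [uncurry4, Hop]
  rw [d4T_apply hd, d4X_apply hdX, d4X_apply hdY, d4Y_apply hdY, d4Z_apply hdZ, d4Y_apply hdZ,
    d4X_apply hdZ, d4X_apply hd, d4Y_apply hd, hX, hY, hZ]
  rfl

theorem uncurry4_MXop (hb0 : b0 = μ0 - σ0^2/2) (xbar s : ℝ) (hF : Differentiable ℝ (uncurry4 F)) :
    uncurry4 (MXop σ0 β0 μ0 ρ xbar s F)
      = mOp σ0 β0 b0 c0 lam0 ρ μ0 coordX (-xbar) s (uncurry4 F) := by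
  funext ⟨t, x, y, z⟩
  simp only [uncurry4, MXop, LXop, d4X_apply hF, d4Y_apply hF, d4Z_apply hF, mOp, heatCommutator,
    firstOrderOp, diffusionDir, dirDeriv_coords]
  simp [coordX, eT, eX, eY, eZ, hb0]
  ring

theorem uncurry4_MYop (ybar s : ℝ) (hF : Differentiable ℝ (uncurry4 F)) :
    uncurry4 (MYop σ0 β0 c0 lam0 ρ ybar s F)
      = mOp σ0 β0 b0 c0 lam0 ρ μ0 coordY (-ybar) s (uncurry4 F) := by
  funext ⟨t, x, y, z⟩
  simp only [uncurry4, MYop, LYop, d4X_apply hF, d4Y_apply hF, d4Z_apply hF, mOp, heatCommutator,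
    firstOrderOp, diffusionDir, dirDeriv_coords]
  simp [coordY, eT, eX, eY, eZ]
  ring

theorem contDiff_uncurry4_Hop (hF : ContDiff ℝ (⊤ : ℕ∞) (uncurry4 F)) :
    ContDiff ℝ (⊤ : ℕ∞) (uncurry4 (Hop σ0 β0 b0 c0 lam0 ρ μ0 F)) := by
  rw [uncurry4_Hop hF]
  fun_prop

theorem contDiff_uncurry4_MXop (xbar s : ℝ) (hF : ContDiff ℝ (⊤ : ℕ∞) (uncurry4 F)) :
    ContDiff ℝ (⊤ : ℕ∞) (uncurry4 (MXop σ0 β0 μ0 ρ xbar s F)) := by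
  rw [uncurry4_MXop (c0 := 0) (lam0 := 0) rfl xbar s (hF.differentiable (by simp))]
  fun_prop

theorem contDiff_uncurry4_MYop (ybar s : ℝ) (hF : ContDiff ℝ (⊤ : ℕ∞) (uncurry4 F)) :
    ContDiff ℝ (⊤ : ℕ∞) (uncurry4 (MYop σ0 β0 c0 lam0 ρ ybar s F)) := by
  rw [uncurry4_MYop (b0 := 0) (μ0 := 0) ybar s (hF.differentiable (by simp))]
  fun_prop

theorem Hop_MXop (hb0 : b0 = μ0 - σ0^2/2) (xbar s : ℝ) (hF : ContDiff ℝ (⊤ : ℕ∞) (uncurry4 F)) :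
    Hop σ0 β0 b0 c0 lam0 ρ μ0 (MXop σ0 β0 μ0 ρ xbar s F)
      = MXop σ0 β0 μ0 ρ xbar s (Hop σ0 β0 b0 c0 lam0 ρ μ0 F) := by
  apply uncurry4_injective
  rw [uncurry4_Hop (contDiff_uncurry4_MXop xbar s hF),
    uncurry4_MXop (c0 := c0) (lam0 := lam0) hb0 xbar s (hF.differentiable (by simp)),
    heatOp_mOp hF, uncurry4_MXop hb0 xbar s ((contDiff_uncurry4_Hop hF).differentiable (by simp)),
    uncurry4_Hop hF]

theorem Hop_MYop (ybar s : ℝ) (hF : ContDiff ℝ (⊤ : ℕ∞) (uncurry4 F)) :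
    Hop σ0 β0 b0 c0 lam0 ρ μ0 (MYop σ0 β0 c0 lam0 ρ ybar s F)
      = MYop σ0 β0 c0 lam0 ρ ybar s (Hop σ0 β0 b0 c0 lam0 ρ μ0 F) := by
  apply uncurry4_injective
  rw [uncurry4_Hop (contDiff_uncurry4_MYop ybar s hF),
    uncurry4_MYop (b0 := b0) (μ0 := μ0) ybar s (hF.differentiable (by simp)), heatOp_mOp hF,
    uncurry4_MYop ybar s ((contDiff_uncurry4_Hop hF).differentiable (by simp)), uncurry4_Hop hF]

end Uncurry

/-- If `ℋ v = 0`, then `ℋ (ℳ_X(s)^k ℳ_Y(s)^l v) = 0` for all `k, l ∈ ℕ` and `s ∈ ℝ`. -/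
theorem H_annihilates_M_powers
    (σ0 β0 μ0 b0 c0 lam0 ρ xbar ybar : ℝ)
    (hb0 : b0 = μ0 - σ0^2/2)
    (v : R4)
    (hv : ContDiff ℝ (⊤ : ℕ∞) (fun p : ℝ × ℝ × ℝ × ℝ => v p.1 p.2.1 p.2.2.1 p.2.2.2))
    (hsol : ∀ t x y z, Hop σ0 β0 b0 c0 lam0 ρ μ0 v t x y z = 0) :
    ∀ (k l : ℕ) (s t x y z : ℝ),
      Hop σ0 β0 b0 c0 lam0 ρ μ0
        ((MXop σ0 β0 μ0 ρ xbar s)^[k] ((MYop σ0 β0 c0 lam0 ρ ybar s)^[l] v))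
        t x y z = 0 := by
  intro k l s t x y z
  let Smooth : R4 → Prop := fun F => ContDiff ℝ (⊤ : ℕ∞) (uncurry4 F)
  have hX : ∀ F, Smooth F → Smooth (MXop σ0 β0 μ0 ρ xbar s F) :=
    fun _ => contDiff_uncurry4_MXop xbar s
  have hY : ∀ F, Smooth F → Smooth (MYop σ0 β0 c0 lam0 ρ ybar s F) :=
    fun _ => contDiff_uncurry4_MYop ybar s
  have hHv : Hop σ0 β0 b0 c0 lam0 ρ μ0 v = 0 :=
    funext fun t => funext fun x => funext fun y => funext fun z => hsol t x y z
  have hX0 : MXop σ0 β0 μ0 ρ xbar s 0 = 0 := by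
    funext t x y z
    simp [MXop, LXop, d4X, d4Y, d4Z]
  have hY0 : MYop σ0 β0 c0 lam0 ρ ybar s 0 = 0 := by
    funext t x y z
    simp [MYop, LYop, d4X, d4Y, d4Z]
  rw [iterate_comm_of_invariant Smooth hX (fun _ => Hop_MXop hb0 xbar s)
      (Function.Iterate.rec Smooth hv hY l) k,
    iterate_comm_of_invariant Smooth hY (fun _ => Hop_MYop ybar s) hv l, hHv,
    Function.iterate_fixed hY0, Function.iterate_fixed hX0]
  rfl
end
end

section
/- Let ℋ, ℳ_X(s), ℳ_Y(s) be as follows: ℋ := ∂_t + (1/2)σ₀² ∂_x² + ρσ₀β₀ ∂_x∂_y + (1/2)β₀² ∂_y² + b₀ ∂_x + c₀ ∂_y + (1/2)λ₀² ∂_z² + ρβ₀λ₀ ∂_y∂_z + μ₀ ∂_x∂_z on smooth functions of (t,x,y,z), ℒ_X := (μ₀ - σ₀²/2) I + σ₀² ∂_x + ρσ₀β₀ ∂_y + μ₀ ∂_z, ℒ_Y := c₀ I + β₀² ∂_y + ρσ₀β₀ ∂_x + ρβ₀λ₀ ∂_z, ℳ_X(s) := (x - x̄) I + (s - t) ℒ_X,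 ℳ_Y(s) := (y - ȳ) I + (s - t) ℒ_Y. Let v be a smooth function with ℋ v = 0, let S be a finite set of triples (n, k, l) of nonnegative integers, and define Q(t,x,y,z) := Σ_{(n,k,l) ∈ S} (T - t)^n (x - x̄)^k (y - ȳ)^l v(t,x,y,z). Then the function q(t,x,y,z) := Σ_{(n,k,l) ∈ S} ∫_t^T (T - s)^n [ℳ_X(s)^k ℳ_Y(s)^l v](t,x,y,z) ds satisfies ℋ q + Q = 0 for t < T and q(T, x, y, z) = 0. -/
noncomputable section

open MeasureTheory

/-!
For a fixed parameter `s`, the operators `ℳ_X(s)` and `ℳ_Y(s)` commute with `ℋ`: the commutator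
of `ℋ` with multiplication by `x - x̄` is `b₀ + σ₀² ∂_x + ρσ₀β₀ ∂_y + μ₀ ∂_z = ℒ_X`, the commutator
with multiplication by `s - t` is `-1`, and `ℋ` commutes with the constant-coefficient `ℒ_X`, so
`ℋ (ℳ_X(s) u) = (x - x̄) ℋ u + ℒ_X u + (s - t) ℒ_X ℋ u - ℒ_X u = ℳ_X(s) ℋ u`; likewise for `Y`.
Hence, regarding `s` as a fifth variable, the integrand
`W(s, t, x, y, z) = Σ (T - s)^n ℳ_X(s)^k ℳ_Y(s)^l v` is a smooth function with `ℋ W = 0`, and on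
the diagonal `s = t` it equals `Q`, since there `ℳ_X(t)` and `ℳ_Y(t)` are multiplications by
`x - x̄` and `y - ȳ`. Differentiating `q(t) = ∫_t^T W(s, t) ds` under the integral sign gives
`ℋ q = -W(t, t) + ∫_t^T ℋ W ds = -Q`.
-/

open Set Filter
open scoped ContDiff

section ParametricIntegral

variable {E : Type*} [NormedAddCommGroup E] [NormedSpace ℝ E] {φ φ' : ℝ → ℝ → E} {a b u₀ : ℝ}

theorem hasDerivAt_intervalIntegral_of_continuous
    (hφ : Continuous (Function.uncurry φ)) (hφ' : Continuous (Function.uncurry φ'))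
    (hderiv : ∀ s u, HasDerivAt (φ s) (φ' s u) u) :
    HasDerivAt (fun u => ∫ s in a..b, φ s u) (∫ s in a..b, φ' s u₀) u₀ := by
  obtain ⟨C, hC⟩ : ∃ C, ∀ p ∈ uIcc a b ×ˢ Metric.closedBall u₀ 1, ‖φ' p.1 p.2‖ ≤ C :=
    (isCompact_uIcc.prod (isCompact_closedBall u₀ 1)).exists_bound_of_continuousOn
      hφ'.continuousOn
  have hcont : ∀ {ψ : ℝ → ℝ → E}, Continuous (Function.uncurry ψ) → ∀ u, Continuous (ψ · u) :=
    fun hψ u => hψ.comp (continuous_id.prodMk continuous_const)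
  exact (intervalIntegral.hasDerivAt_integral_of_dominated_loc_of_deriv_le
    (bound := fun _ => C) (Metric.ball_mem_nhds u₀ one_pos)
    (Eventually.of_forall fun u => (hcont hφ u).aestronglyMeasurable)
    ((hcont hφ u₀).intervalIntegrable a b) (hcont hφ' u₀).aestronglyMeasurable
    (Eventually.of_forall fun s hs u hu =>
      hC (s, u) ⟨uIoc_subset_uIcc hs, Metric.ball_subset_closedBall hu⟩)
    intervalIntegrable_const (Eventually.of_forall fun s _ u _ => hderiv s u)).2

theorem hasDerivAt_intervalIntegral_diag [CompleteSpace E] (hφ : Continuous (Function.uncurry φ)) :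
    HasDerivAt (fun τ => ∫ s in a..τ, φ s τ) (φ a a) a := by
  rw [hasDerivAt_iff_isLittleO, Asymptotics.isLittleO_iff]
  intro ε hε
  obtain ⟨δ, hδ, hball⟩ := Metric.continuousAt_iff.1 (hφ.continuousAt (x := (a, a))) ε hε
  filter_upwards [Metric.ball_mem_nhds a hδ] with τ hτ
  have hint : IntervalIntegrable (φ · τ) volume a τ :=
    (hφ.comp (continuous_id.prodMk continuous_const)).intervalIntegrable a τ
  have hsplit : (∫ s in a..τ, φ s τ) - (∫ s in a..a, φ s a) - (τ - a) • φ a a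
      = ∫ s in a..τ, (φ s τ - φ a a) := by
    rw [intervalIntegral.integral_same, sub_zero,
      intervalIntegral.integral_sub hint intervalIntegrable_const, intervalIntegral.integral_const]
  rw [hsplit, Real.norm_eq_abs]
  refine intervalIntegral.norm_integral_le_of_norm_le_const fun s hs => ?_
  have hs' : dist s a ≤ dist τ a := by
    simpa [Real.dist_eq] using abs_sub_left_of_mem_uIcc (uIoc_subset_uIcc hs)
  have hclose : dist (s, τ) (a, a) < δ := by
    rw [Prod.dist_eq]; exact max_lt (hs'.trans_lt hτ) hτ
  exact (dist_eq_norm (φ s τ) (φ a a) ▸ hball hclose).le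

theorem hasDerivAt_intervalIntegral_lower_param [CompleteSpace E]
    (hφ : Continuous (Function.uncurry φ)) (hφ' : Continuous (Function.uncurry φ'))
    (hderiv : ∀ s u, HasDerivAt (φ s) (φ' s u) u) :
    HasDerivAt (fun τ => ∫ s in τ..b, φ s τ) (-φ u₀ u₀ + ∫ s in u₀..b, φ' s u₀) u₀ := by
  have hint : ∀ τ c d, IntervalIntegrable (φ · τ) volume c d := fun τ c d =>
    (hφ.comp (continuous_id.prodMk continuous_const)).intervalIntegrable c d
  have hsplit : (fun τ => ∫ s in τ..b, φ s τ)
      = fun τ => (∫ s in u₀..b, φ s τ) - ∫ s in u₀..τ, φ s τ := by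
    funext τ
    rw [intervalIntegral.integral_interval_sub_left (hint τ u₀ b) (hint τ u₀ τ)]
  rw [hsplit, neg_add_eq_sub]
  exact (hasDerivAt_intervalIntegral_of_continuous hφ hφ' hderiv).sub
    (hasDerivAt_intervalIntegral_diag hφ)

end ParametricIntegral

section PartialDeriv

variable {E : Type*} [NormedAddCommGroup E] [NormedSpace ℝ E] {e e₁ e₂ : E} {f g : E → ℝ}

/-- Defined through `lineDeriv` so that it agrees with the coordinate derivatives `d4T`, ..., `d4Z`
for every function, differentiable or not. -/
def pderiv (e : E) (f : E → ℝ) : E → ℝ := fun p => lineDeriv ℝ f p e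

lemma pderiv_eq_fderiv (hf : Differentiable ℝ f) : pderiv e f = fun p => fderiv ℝ f p e :=
  funext fun p => (hf p).lineDeriv_eq_fderiv

lemma contDiff_pderiv {n : WithTop ℕ∞} (hf : ContDiff ℝ (n + 1) f) :
    ContDiff ℝ n (pderiv e f) := by
  rw [pderiv_eq_fderiv (hf.differentiable (by simp))]
  exact (hf.fderiv_right le_rfl).clm_apply contDiff_const

@[fun_prop]
lemma ContDiff.pderiv (hf : ContDiff ℝ ∞ f) : ContDiff ℝ ∞ (_root_.pderiv e f) :=
  contDiff_pderiv (n := ∞) hf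

@[simp]
lemma pderiv_const (c : ℝ) : pderiv e (fun _ => c) = fun _ => 0 := by
  funext p; simp [pderiv, lineDeriv]

@[simp]
lemma pderiv_zero : pderiv e (0 : E → ℝ) = 0 :=
  pderiv_const 0

lemma pderiv_add (hf : Differentiable ℝ f) (hg : Differentiable ℝ g) :
    pderiv e (fun p => f p + g p) = fun p => pderiv e f p + pderiv e g p := by
  rw [pderiv_eq_fderiv hf, pderiv_eq_fderiv hg,
    pderiv_eq_fderiv (f := fun p => f p + g p) (hf.add hg)]
  funext p; simp [fderiv_fun_add (hf p) (hg p)]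

lemma pderiv_mul (hf : Differentiable ℝ f) (hg : Differentiable ℝ g) :
    pderiv e (fun p => f p * g p) = fun p => pderiv e f p * g p + f p * pderiv e g p := by
  rw [pderiv_eq_fderiv hf, pderiv_eq_fderiv hg,
    pderiv_eq_fderiv (f := fun p => f p * g p) (hf.mul hg)]
  funext p
  simp only [fderiv_fun_mul (hf p) (hg p), add_apply,
    smul_apply, smul_eq_mul]
  ring

lemma pderiv_const_mul (c : ℝ) (hf : Differentiable ℝ f) :
    pderiv e (fun p => c * f p) = fun p => c * pderiv e f p := by
  simp [pderiv_mul (differentiable_const c) hf]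

lemma pderiv_comm (hf : ContDiff ℝ 2 f) :
    pderiv e₁ (pderiv e₂ f) = pderiv e₂ (pderiv e₁ f) := by
  have hf' : Differentiable ℝ (fderiv ℝ f) :=
    (hf.fderiv_right (m := 1) le_rfl).differentiable (by simp)
  have hfe : ∀ e, Differentiable ℝ (fun p => fderiv ℝ f p e) :=
    fun e => hf'.clm_apply (differentiable_const e)
  simp only [pderiv_eq_fderiv (hf.differentiable (by simp)), pderiv_eq_fderiv (hfe _)]
  funext p
  rw [fderiv_clm_apply (hf' p) (differentiableAt_const _),
    fderiv_clm_apply (hf' p) (differentiableAt_const _)]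
  simpa using hf.contDiffAt.isSymmSndFDerivAt (by simp) e₁ e₂

lemma hasDerivAt_comp_add_smul (hf : Differentiable ℝ f) (p e : E) (u : ℝ) :
    HasDerivAt (fun u => f (p + u • e)) (pderiv e f (p + u • e)) u := by
  rw [pderiv_eq_fderiv hf]
  have hline : HasDerivAt (fun u : ℝ => p + u • e) e u := by
    simpa using ((hasDerivAt_id u).smul_const e).const_add p
  exact (hf _).hasFDerivAt.comp_hasDerivAt u hline

lemma pderiv_fst_mul {F : Type*} [NormedAddCommGroup F] [NormedSpace ℝ F] {e : ℝ × F}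
    (he : e.1 = 0) (c : ℝ → ℝ) (f : ℝ × F → ℝ) :
    pderiv e (fun p => c p.1 * f p) = fun p => c p.1 * pderiv e f p := by
  funext p; simp [pderiv, lineDeriv, he]

end PartialDeriv

local notation "𝔼" => ℝ × ℝ × ℝ × ℝ × ℝ

/-! A function on `𝔼`, with coordinates `(s, t, x, y, z)`, stands for a family of functions of
`(t, x, y, z)` indexed by the parameter `s` of `ℳ_X(s)` and `ℳ_Y(s)`. -/

namespace Family

def slice (f : 𝔼 → ℝ) (s : ℝ) : R4 := fun t x y z => f (s, t, x, y, z)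

def const (v : R4) : 𝔼 → ℝ := fun p => v p.2.1 p.2.2.1 p.2.2.2.1 p.2.2.2.2

def eT : 𝔼 := (0, 1, 0, 0, 0)
def eX : 𝔼 := (0, 0, 1, 0, 0)
def eY : 𝔼 := (0, 0, 0, 1, 0)
def eZ : 𝔼 := (0, 0, 0, 0, 1)

lemma d4T_slice (f : 𝔼 → ℝ) (s : ℝ) : d4T (slice f s) = slice (pderiv eT f) s := by
  funext t x y z
  simpa [d4T, slice, pderiv, lineDeriv, eT] using
    (deriv_comp_const_add (fun u => f (s, u, x, y, z)) t 0).symm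

lemma d4X_slice (f : 𝔼 → ℝ) (s : ℝ) : d4X (slice f s) = slice (pderiv eX f) s := by
  funext t x y z
  simpa [d4X, slice, pderiv, lineDeriv, eX] using
    (deriv_comp_const_add (fun u => f (s, t, u, y, z)) x 0).symm

lemma d4Y_slice (f : 𝔼 → ℝ) (s : ℝ) : d4Y (slice f s) = slice (pderiv eY f) s := by
  funext t x y z
  simpa [d4Y, slice, pderiv, lineDeriv, eY] using
    (deriv_comp_const_add (fun u => f (s, t, x, u, z)) y 0).symm

lemma d4Z_slice (f : 𝔼 → ℝ) (s : ℝ) : d4Z (slice f s) = slice (pderiv eZ f) s := by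
  funext t x y z
  simpa [d4Z, slice, pderiv, lineDeriv, eZ] using
    (deriv_comp_const_add (fun u => f (s, t, x, y, u)) z 0).symm

def Hop (σ0 β0 b0 c0 lam0 ρ μ0 : ℝ) (f : 𝔼 → ℝ) : 𝔼 → ℝ := fun p =>
  pderiv eT f p
  + (1/2) * σ0^2 * pderiv eX (pderiv eX f) p
  + ρ * σ0 * β0 * pderiv eX (pderiv eY f) p
  + (1/2) * β0^2 * pderiv eY (pderiv eY f) p
  + b0 * pderiv eX f p
  + c0 * pderiv eY f p
  + (1/2) * lam0^2 * pderiv eZ (pderiv eZ f) p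
  + ρ * β0 * lam0 * pderiv eY (pderiv eZ f) p
  + μ0 * pderiv eX (pderiv eZ f) p

def LXop (σ0 β0 μ0 ρ : ℝ) (f : 𝔼 → ℝ) : 𝔼 → ℝ := fun p =>
  (μ0 - σ0^2/2) * f p + σ0^2 * pderiv eX f p + ρ * σ0 * β0 * pderiv eY f p
  + μ0 * pderiv eZ f p

def LYop (σ0 β0 c0 lam0 ρ : ℝ) (f : 𝔼 → ℝ) : 𝔼 → ℝ := fun p =>
  c0 * f p + β0^2 * pderiv eY f p + ρ * σ0 * β0 * pderiv eX f p
  + ρ * β0 * lam0 * pderiv eZ f p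

def MXop (σ0 β0 μ0 ρ xbar : ℝ) (f : 𝔼 → ℝ) : 𝔼 → ℝ := fun p =>
  (p.2.2.1 - xbar) * f p + (p.1 - p.2.1) * LXop σ0 β0 μ0 ρ f p

def MYop (σ0 β0 c0 lam0 ρ ybar : ℝ) (f : 𝔼 → ℝ) : 𝔼 → ℝ := fun p =>
  (p.2.2.2.1 - ybar) * f p + (p.1 - p.2.1) * LYop σ0 β0 c0 lam0 ρ f p

def timeIntegral (T : ℝ) (W : 𝔼 → ℝ) : R4 := fun t x y z => ∫ s in t..T, W (s, t, x, y, z)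

def duhamelIntegrand (σ0 β0 c0 lam0 ρ μ0 xbar ybar T : ℝ) (v : R4) (S : Finset (ℕ × ℕ × ℕ)) :
    𝔼 → ℝ := fun p =>
  ∑ i ∈ S, (T - p.1)^i.1
    * ((MXop σ0 β0 μ0 ρ xbar)^[i.2.1] ((MYop σ0 β0 c0 lam0 ρ ybar)^[i.2.2] (const v))) p

section

variable {σ0 β0 b0 c0 lam0 ρ μ0 xbar ybar T : ℝ} {f g W : 𝔼 → ℝ} {v : R4}
  {S : Finset (ℕ × ℕ × ℕ)}

local notation "ℋ" => Hop σ0 β0 b0 c0 lam0 ρ μ0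
local notation "ℒX" => LXop σ0 β0 μ0 ρ
local notation "ℒY" => LYop σ0 β0 c0 lam0 ρ
local notation "ℳX" => MXop σ0 β0 μ0 ρ xbar
local notation "ℳY" => MYop σ0 β0 c0 lam0 ρ ybar
local notation "𝒲" => duhamelIntegrand σ0 β0 c0 lam0 ρ μ0 xbar ybar T v S

lemma Hop_slice (f : 𝔼 → ℝ) (s : ℝ) :
    _root_.Hop σ0 β0 b0 c0 lam0 ρ μ0 (slice f s) = slice (ℋ f) s := by
  unfold _root_.Hop
  simp only [d4T_slice, d4X_slice, d4Y_slice, d4Z_slice]; rfl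

lemma MXop_slice (f : 𝔼 → ℝ) (s : ℝ) :
    _root_.MXop σ0 β0 μ0 ρ xbar s (slice f s) = slice (ℳX f) s := by
  unfold _root_.MXop _root_.LXop
  simp only [d4X_slice, d4Y_slice, d4Z_slice]; rfl

lemma MYop_slice (f : 𝔼 → ℝ) (s : ℝ) :
    _root_.MYop σ0 β0 c0 lam0 ρ ybar s (slice f s) = slice (ℳY f) s := by
  unfold _root_.MYop _root_.LYop
  simp only [d4X_slice, d4Y_slice, d4Z_slice]; rfl

lemma Hop_const : ℋ (const v) = const (_root_.Hop σ0 β0 b0 c0 lam0 ρ μ0 v) := by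
  funext ⟨s, t, x, y, z⟩
  exact (congrFun (congrFun (congrFun (congrFun (Hop_slice (const v) s) t) x) y) z).symm

lemma iterate_MXop_slice (f : 𝔼 → ℝ) (s : ℝ) (k : ℕ) :
    (_root_.MXop σ0 β0 μ0 ρ xbar s)^[k] (slice f s) = slice (ℳX^[k] f) s :=
  ((Function.Semiconj.iterate_right (f := (slice · s)) (fun f => (MXop_slice f s).symm) k) f).symm

lemma iterate_MYop_slice (f : 𝔼 → ℝ) (s : ℝ) (l : ℕ) :
    (_root_.MYop σ0 β0 c0 lam0 ρ ybar s)^[l] (slice f s) = slice (ℳY^[l] f) s :=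
  ((Function.Semiconj.iterate_right (f := (slice · s)) (fun f => (MYop_slice f s).symm) l) f).symm

lemma iterate_slice_const (s : ℝ) (k l : ℕ) :
    (_root_.MXop σ0 β0 μ0 ρ xbar s)^[k] ((_root_.MYop σ0 β0 c0 lam0 ρ ybar s)^[l] v)
      = slice (ℳX^[k] (ℳY^[l] (const v))) s := by
  rw [← iterate_MXop_slice, ← iterate_MYop_slice]; rfl

lemma iterate_MXop_diag (f : 𝔼 → ℝ) (k : ℕ) (t x y z : ℝ) :
    (ℳX^[k] f) (t, t, x, y, z) = (x - xbar)^k * f (t, t, x, y, z) := by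
  induction k with
  | zero => simp
  | succ k ih => rw [Function.iterate_succ_apply']; simp only [MXop, ih, sub_self]; ring

lemma iterate_MYop_diag (f : 𝔼 → ℝ) (l : ℕ) (t x y z : ℝ) :
    (ℳY^[l] f) (t, t, x, y, z) = (y - ybar)^l * f (t, t, x, y, z) := by
  induction l with
  | zero => simp
  | succ l ih => rw [Function.iterate_succ_apply']; simp only [MYop, ih, sub_self]; ring

lemma MXop_zero : ℳX 0 = 0 := by
  funext p; simp [MXop, LXop]

lemma MYop_zero : ℳY 0 = 0 := by
  funext p; simp [MYop, LYop]

@[fun_prop]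
lemma contDiff_LXop (hf : ContDiff ℝ ∞ f) : ContDiff ℝ ∞ (ℒX f) := by
  unfold LXop; fun_prop

@[fun_prop]
lemma contDiff_LYop (hf : ContDiff ℝ ∞ f) : ContDiff ℝ ∞ (ℒY f) := by
  unfold LYop; fun_prop

@[fun_prop]
lemma contDiff_iterate_MXop (hf : ContDiff ℝ ∞ f) (k : ℕ) : ContDiff ℝ ∞ (ℳX^[k] f) := by
  induction k with
  | zero => exact hf
  | succ k ih => rw [Function.iterate_succ_apply']; unfold MXop; fun_prop

@[fun_prop]
lemma contDiff_iterate_MYop (hf : ContDiff ℝ ∞ f) (l : ℕ) : ContDiff ℝ ∞ (ℳY^[l] f) := by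
  induction l with
  | zero => exact hf
  | succ l ih => rw [Function.iterate_succ_apply']; unfold MYop; fun_prop

lemma Hop_add (hf : ContDiff ℝ ∞ f) (hg : ContDiff ℝ ∞ g) :
    ℋ (fun p => f p + g p) = fun p => ℋ f p + ℋ g p := by
  unfold Hop
  simp (disch := fun_prop (disch := simp)) only [pderiv_add]
  funext p; ring

lemma Hop_const_mul (c : ℝ) (hf : ContDiff ℝ ∞ f) : ℋ (fun p => c * f p) = fun p => c * ℋ f p := by
  unfold Hop
  simp (disch := fun_prop (disch := simp)) only [pderiv_const_mul]
  funext p; ring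

lemma Hop_sum {ι : Type*} (S : Finset ι) {F : ι → 𝔼 → ℝ} (hF : ∀ i ∈ S, ContDiff ℝ ∞ (F i)) :
    ℋ (fun p => ∑ i ∈ S, F i p) = fun p => ∑ i ∈ S, ℋ (F i) p := by
  induction S using Finset.cons_induction with
  | empty => unfold Hop; simp
  | cons a S ha ih =>
    simp only [Finset.sum_cons]
    rw [Hop_add (hF a (by simp)) (ContDiff.sum fun i hi => hF i (by simp [hi])),
      ih fun i hi => hF i (by simp [hi])]

lemma Hop_fst_mul (c : ℝ → ℝ) : ℋ (fun p => c p.1 * f p) = fun p => c p.1 * ℋ f p := by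
  unfold Hop
  simp only [pderiv_fst_mul (e := eT) rfl, pderiv_fst_mul (e := eX) rfl,
    pderiv_fst_mul (e := eY) rfl, pderiv_fst_mul (e := eZ) rfl]
  funext p; ring

lemma Hop_pderiv (d : 𝔼) (hf : ContDiff ℝ ∞ f) : ℋ (pderiv d f) = pderiv d (ℋ f) := by
  have hcomm : ∀ e (g : 𝔼 → ℝ), ContDiff ℝ ∞ g → pderiv e (pderiv d g) = pderiv d (pderiv e g) :=
    fun e g hg => pderiv_comm (contDiff_infty.1 hg 2)
  unfold Hop
  simp (disch := fun_prop (disch := simp)) only [pderiv_add, pderiv_const_mul, hcomm]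

lemma Hop_mul_x (hb0 : b0 = μ0 - σ0^2/2) (hf : ContDiff ℝ ∞ f) :
    ℋ (fun p => (p.2.2.1 - xbar) * f p) = fun p => (p.2.2.1 - xbar) * ℋ f p + ℒX f p := by
  have hx : ∀ e : 𝔼, pderiv e (fun p => p.2.2.1 - xbar) = fun _ => e.2.2.1 := by
    intro e; funext p; simp [pderiv, lineDeriv]
  unfold Hop LXop
  simp (disch := fun_prop (disch := simp)) only [pderiv_add, pderiv_mul, hx, pderiv_const]
  funext p
  simp only [eT, eX, eY, eZ, hb0]
  ring

lemma Hop_mul_y (hf : ContDiff ℝ ∞ f) :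
    ℋ (fun p => (p.2.2.2.1 - ybar) * f p) = fun p => (p.2.2.2.1 - ybar) * ℋ f p + ℒY f p := by
  have hy : ∀ e : 𝔼, pderiv e (fun p => p.2.2.2.1 - ybar) = fun _ => e.2.2.2.1 := by
    intro e; funext p; simp [pderiv, lineDeriv]
  unfold Hop LYop
  simp (disch := fun_prop (disch := simp)) only [pderiv_add, pderiv_mul, hy, pderiv_const]
  funext p
  simp only [eT, eX, eY, eZ]
  ring

lemma Hop_mul_time (hf : ContDiff ℝ ∞ f) :
    ℋ (fun p => (p.1 - p.2.1) * f p) = fun p => (p.1 - p.2.1) * ℋ f p - f p := by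
  have ht : ∀ e : 𝔼, pderiv e (fun p => p.1 - p.2.1) = fun _ => e.1 - e.2.1 := by
    intro e; funext p; simp [pderiv, lineDeriv]
  unfold Hop
  simp (disch := fun_prop (disch := simp)) only [pderiv_add, pderiv_mul, ht, pderiv_const]
  funext p
  simp only [eT, eX, eY, eZ]
  ring

lemma Hop_LXop (hf : ContDiff ℝ ∞ f) : ℋ (ℒX f) = ℒX (ℋ f) := by
  unfold LXop
  simp (disch := fun_prop) only [Hop_add, Hop_const_mul, Hop_pderiv]

lemma Hop_LYop (hf : ContDiff ℝ ∞ f) : ℋ (ℒY f) = ℒY (ℋ f) := by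
  unfold LYop
  simp (disch := fun_prop) only [Hop_add, Hop_const_mul, Hop_pderiv]

lemma Hop_MXop (hb0 : b0 = μ0 - σ0^2/2) (hf : ContDiff ℝ ∞ f) : ℋ (ℳX f) = ℳX (ℋ f) := by
  unfold MXop
  rw [Hop_add (by fun_prop) (by fun_prop), Hop_mul_x hb0 hf, Hop_mul_time (by fun_prop),
    Hop_LXop hf]
  funext p; ring

lemma Hop_MYop (hf : ContDiff ℝ ∞ f) : ℋ (ℳY f) = ℳY (ℋ f) := by
  unfold MYop
  rw [Hop_add (by fun_prop) (by fun_prop), Hop_mul_y hf, Hop_mul_time (by fun_prop), Hop_LYop hf]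
  funext p; ring

lemma Hop_iterate_MXop (hb0 : b0 = μ0 - σ0^2/2) (hf : ContDiff ℝ ∞ f) (k : ℕ) :
    ℋ (ℳX^[k] f) = ℳX^[k] (ℋ f) := by
  induction k with
  | zero => rfl
  | succ k ih =>
    rw [Function.iterate_succ_apply', Function.iterate_succ_apply',
      Hop_MXop hb0 (contDiff_iterate_MXop hf k), ih]

lemma Hop_iterate_MYop (hf : ContDiff ℝ ∞ f) (l : ℕ) : ℋ (ℳY^[l] f) = ℳY^[l] (ℋ f) := by
  induction l with
  | zero => rfl
  | succ l ih =>
    rw [Function.iterate_succ_apply', Function.iterate_succ_apply',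
      Hop_MYop (contDiff_iterate_MYop hf l), ih]

lemma d4X_timeIntegral (hW : ContDiff ℝ ∞ W) :
    d4X (timeIntegral T W) = timeIntegral T (pderiv eX W) := by
  funext t x y z
  refine (hasDerivAt_intervalIntegral_of_continuous (φ := fun s u => W (s, t, u, y, z))
    (φ' := fun s u => pderiv eX W (s, t, u, y, z)) (by fun_prop) (by fun_prop)
    fun s u => ?_).deriv
  simpa [eX] using hasDerivAt_comp_add_smul (hW.differentiable (by simp)) (s, t, 0, y, z) eX u

lemma d4Y_timeIntegral (hW : ContDiff ℝ ∞ W) :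
    d4Y (timeIntegral T W) = timeIntegral T (pderiv eY W) := by
  funext t x y z
  refine (hasDerivAt_intervalIntegral_of_continuous (φ := fun s u => W (s, t, x, u, z))
    (φ' := fun s u => pderiv eY W (s, t, x, u, z)) (by fun_prop) (by fun_prop)
    fun s u => ?_).deriv
  simpa [eY] using hasDerivAt_comp_add_smul (hW.differentiable (by simp)) (s, t, x, 0, z) eY u

lemma d4Z_timeIntegral (hW : ContDiff ℝ ∞ W) :
    d4Z (timeIntegral T W) = timeIntegral T (pderiv eZ W) := by
  funext t x y z
  refine (hasDerivAt_intervalIntegral_of_continuous (φ := fun s u => W (s, t, x, y, u))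
    (φ' := fun s u => pderiv eZ W (s, t, x, y, u)) (by fun_prop) (by fun_prop)
    fun s u => ?_).deriv
  simpa [eZ] using hasDerivAt_comp_add_smul (hW.differentiable (by simp)) (s, t, x, y, 0) eZ u

lemma d4T_timeIntegral (hW : ContDiff ℝ ∞ W) (t x y z : ℝ) :
    d4T (timeIntegral T W) t x y z = -W (t, t, x, y, z) + timeIntegral T (pderiv eT W) t x y z := by
  refine (hasDerivAt_intervalIntegral_lower_param (φ := fun s u => W (s, u, x, y, z))
    (φ' := fun s u => pderiv eT W (s, u, x, y, z)) (by fun_prop) (by fun_prop)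
    fun s u => ?_).deriv
  simpa [eT] using hasDerivAt_comp_add_smul (hW.differentiable (by simp)) (s, 0, x, y, z) eT u

lemma Hop_timeIntegral (hW : ContDiff ℝ ∞ W) (t x y z : ℝ) :
    _root_.Hop σ0 β0 b0 c0 lam0 ρ μ0 (timeIntegral T W) t x y z
      = -W (t, t, x, y, z) + timeIntegral T (ℋ W) t x y z := by
  unfold _root_.Hop
  simp (disch := fun_prop) only [d4X_timeIntegral, d4Y_timeIntegral, d4Z_timeIntegral]
  rw [d4T_timeIntegral hW]
  unfold timeIntegral Hop
  simp (disch := exact Continuous.intervalIntegrable (by fun_prop) _ _) only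
    [intervalIntegral.integral_add, intervalIntegral.integral_const_mul]
  ring

lemma Hop_iterate_const (hb0 : b0 = μ0 - σ0^2/2)
    (hv : ContDiff ℝ ∞ (const v))
    (hsol : ∀ t x y z, _root_.Hop σ0 β0 b0 c0 lam0 ρ μ0 v t x y z = 0) (k l : ℕ) :
    ℋ (ℳX^[k] (ℳY^[l] (const v))) = 0 := by
  have hHv : ℋ (const v) = 0 := by
    rw [Hop_const]; funext p; exact hsol _ _ _ _
  rw [Hop_iterate_MXop hb0 (contDiff_iterate_MYop hv l), Hop_iterate_MYop hv, hHv,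
    Function.iterate_fixed MYop_zero, Function.iterate_fixed MXop_zero]

lemma contDiff_duhamelIntegrand
    (hv : ContDiff ℝ ∞ (const v)) :
    ContDiff ℝ ∞ 𝒲 := by
  unfold duhamelIntegrand; fun_prop

lemma Hop_duhamelIntegrand (hb0 : b0 = μ0 - σ0^2/2)
    (hv : ContDiff ℝ ∞ (const v))
    (hsol : ∀ t x y z, _root_.Hop σ0 β0 b0 c0 lam0 ρ μ0 v t x y z = 0) : ℋ 𝒲 = 0 := by
  unfold duhamelIntegrand
  rw [Hop_sum S fun i _ => by fun_prop]
  funext p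
  refine Finset.sum_eq_zero fun i _ => ?_
  rw [Hop_fst_mul (fun s => (T - s)^i.1), Hop_iterate_const hb0 hv hsol]
  simp

lemma duhamelIntegrand_diag (t x y z : ℝ) :
    𝒲 (t, t, x, y, z) = ∑ i ∈ S, (T - t)^i.1 * (x - xbar)^i.2.1 * (y - ybar)^i.2.2 * v t x y z := by
  simp [duhamelIntegrand, iterate_MXop_diag, iterate_MYop_diag, const, mul_assoc]

lemma timeIntegral_duhamelIntegrand
    (hv : ContDiff ℝ ∞ (const v)) (t x y z : ℝ) :
    timeIntegral T 𝒲 t x y z = ∑ i ∈ S, ∫ s in t..T, (T - s)^i.1 *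
      ((_root_.MXop σ0 β0 μ0 ρ xbar s)^[i.2.1]
        ((_root_.MYop σ0 β0 c0 lam0 ρ ybar s)^[i.2.2] v)) t x y z := by
  unfold timeIntegral duhamelIntegrand
  rw [intervalIntegral.integral_finsetSum fun i _ =>
    Continuous.intervalIntegrable (by fun_prop) _ _]
  simp only [iterate_slice_const]
  rfl

end

end Family

/-- Duhamel-type representation: if `ℋ v = 0` and
`Q = Σ_{(n,k,l) ∈ S} (T-t)^n (x-x̄)^k (y-ȳ)^l v`, then
`q = Σ_{(n,k,l) ∈ S} ∫_t^T (T-s)^n ℳ_X(s)^k ℳ_Y(s)^l v ds`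
satisfies `ℋ q + Q = 0` for `t < T` and `q(T, ·) = 0`. -/
theorem source_solution_formula
    (T σ0 β0 μ0 b0 c0 lam0 ρ xbar ybar : ℝ)
    (hb0 : b0 = μ0 - σ0^2/2)
    (v : R4)
    (hv : ContDiff ℝ (⊤ : ℕ∞) (fun p : ℝ × ℝ × ℝ × ℝ => v p.1 p.2.1 p.2.2.1 p.2.2.2))
    (hsol : ∀ t x y z, Hop σ0 β0 b0 c0 lam0 ρ μ0 v t x y z = 0)
    (S : Finset (ℕ × ℕ × ℕ))
    (Q : R4)
    (hQ : ∀ t x y z, Q t x y z =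
      ∑ p ∈ S, (T - t)^p.1 * (x - xbar)^p.2.1 * (y - ybar)^p.2.2 * v t x y z)
    (q : R4)
    (hq : ∀ t x y z, q t x y z =
      ∑ p ∈ S, ∫ s in t..T, (T - s)^p.1 *
        ((MXop σ0 β0 μ0 ρ xbar s)^[p.2.1]
          ((MYop σ0 β0 c0 lam0 ρ ybar s)^[p.2.2] v)) t x y z) :
    (∀ t < T, ∀ (x y z : ℝ),
        Hop σ0 β0 b0 c0 lam0 ρ μ0 q t x y z + Q t x y z = 0) ∧
    (∀ x y z : ℝ, q T x y z = 0) := by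
  have hV : ContDiff ℝ ∞ (Family.const v) := hv.comp contDiff_snd
  have hqW :
      q = Family.timeIntegral T (Family.duhamelIntegrand σ0 β0 c0 lam0 ρ μ0 xbar ybar T v S) := by
    funext t x y z; rw [hq, Family.timeIntegral_duhamelIntegrand hV]
  refine ⟨fun t _ x y z => ?_, fun x y z => by simp [hq]⟩
  rw [hqW, Family.Hop_timeIntegral (Family.contDiff_duhamelIntegrand hV),
    Family.Hop_duhamelIntegrand hb0 hV hsol, Family.duhamelIntegrand_diag, hQ]
  simp [Family.timeIntegral]
end
end

section
/- Let constants λ₀, λ₁₀, λ₀₁, μ₀, σ₀, β₀, c₀, ρ, x̄, ȳ, T ∈ ℝ be given and let q⁽⁰⁾(t, z) be a smooth function solving the backward heat equation ∂_t q⁽⁰⁾ + (1/2) λ₀² ∂_z² q⁽⁰⁾ = 0. Define A(t, x, y) := λ₁₀ [(x - x̄) + (1/2)(T - t)(μ₀ - σ₀²/2)] + λ₀₁ [(y - ȳ) + (1/2)(T - t) c₀] and B := λ₁₀ μ₀ + λ₀₁ ρ β₀ λ₀. Then the function q⁽¹⁾(t, x, y, z) := (T - t) λ₀ A(t, x, y)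 ∂_z q⁽⁰⁾(t, z) + (1/2)(T - t)² λ₀ B ∂_z² q⁽⁰⁾(t, z) satisfies (∂_t + 𝒜₀ + 𝒞₀) q⁽¹⁾ + Q₁ = 0 with terminal condition q⁽¹⁾(T, x, y, z) = 0, where Q₁(t, x, y, z) := [λ₀ λ₁₀ (x - x̄) + λ₀ λ₀₁ (y - ȳ)] ∂_z q⁽⁰⁾(t, z), 𝒜₀ := (1/2)σ₀² ∂_x² + ρσ₀β₀ ∂_x∂_y + (1/2)β₀² ∂_y² + (μ₀ - σ₀²/2) ∂_x + c₀ ∂_y, and 𝒞₀ := (1/2)λ₀² ∂_z² + ρβ₀λ₀ ∂_y∂_z + μ₀ ∂_x∂_z. -/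
/-! Write `g = ∂_z q⁰` and `h = ∂_z² q⁰`. Since mixed partial derivatives of a smooth
function commute, each `z`-derivative of a solution of `∂_t u + ½λ₀² ∂_z² u = 0` is again a
solution. Now `q¹ = α(t, x, y) g + β(t) h` with `α` affine in `(x, y)`. Functions of this shape
are closed under `∂_x`, `∂_y`, `∂_z`, and the heat terms cancel in
`(∂_t + ½λ₀² ∂_z²)(α g + β h) = ∂_t α · g + ∂_t β · h`, so what is left is a polynomial
identity in the coefficients. -/

noncomputable section

/-- Partial derivative of `q⁰(t, z)` in the time variable. -/
def dT2 (f : ℝ → ℝ → ℝ) : ℝ → ℝ → ℝ := fun t z => deriv (fun s => f s z) t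

/-- Partial derivative of `q⁰(t, z)` in the `z` variable. -/
def dZ2 (f : ℝ → ℝ → ℝ) : ℝ → ℝ → ℝ := fun t z => deriv (fun u => f t u) z

open Function
open scoped ContDiff

section PartialDerivatives

variable {f : ℝ → ℝ → ℝ} {t z : ℝ}

theorem DifferentiableAt.hasDerivAt_slice_snd (hf : DifferentiableAt ℝ (uncurry f) (t, z)) :
    HasDerivAt (f t) (fderiv ℝ (uncurry f) (t, z) (0, 1)) z :=
  hf.hasFDerivAt.comp_hasDerivAt z ((hasDerivAt_const z t).prodMk (hasDerivAt_id z))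

theorem DifferentiableAt.hasDerivAt_slice_fst (hf : DifferentiableAt ℝ (uncurry f) (t, z)) :
    HasDerivAt (fun s => f s z) (fderiv ℝ (uncurry f) (t, z) (1, 0)) t :=
  hf.hasFDerivAt.comp_hasDerivAt (l := uncurry f) t
    ((hasDerivAt_id t).prodMk (hasDerivAt_const t z))

theorem dZ2_eq_fderiv (hf : DifferentiableAt ℝ (uncurry f) (t, z)) :
    dZ2 f t z = fderiv ℝ (uncurry f) (t, z) (0, 1) :=
  hf.hasDerivAt_slice_snd.deriv

theorem dT2_eq_fderiv (hf : DifferentiableAt ℝ (uncurry f) (t, z)) :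
    dT2 f t z = fderiv ℝ (uncurry f) (t, z) (1, 0) :=
  hf.hasDerivAt_slice_fst.deriv

theorem hasDerivAt_dZ2 (hf : DifferentiableAt ℝ (uncurry f) (t, z)) :
    HasDerivAt (f t) (dZ2 f t z) z :=
  hf.hasDerivAt_slice_snd.differentiableAt.hasDerivAt

theorem hasDerivAt_dT2 (hf : DifferentiableAt ℝ (uncurry f) (t, z)) :
    HasDerivAt (fun s => f s z) (dT2 f t z) t :=
  hf.hasDerivAt_slice_fst.differentiableAt.hasDerivAt

theorem ContDiff.uncurry_dZ2 {m n : WithTop ℕ∞} (hf : ContDiff ℝ n (uncurry f))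
    (hmn : m + 1 ≤ n) : ContDiff ℝ m (uncurry (dZ2 f)) := by
  have hd : Differentiable ℝ (uncurry f) :=
    hf.differentiable (ne_bot_of_le_ne_bot (by simp) hmn)
  have e : uncurry (dZ2 f) = fun p => fderiv ℝ (uncurry f) p (0, 1) :=
    funext fun p => dZ2_eq_fderiv (hd p)
  rw [e]
  exact (hf.fderiv_right hmn).clm_apply contDiff_const

theorem dT2_dZ2_comm (hf : ContDiff ℝ 2 (uncurry f)) : dT2 (dZ2 f) t z = dZ2 (dT2 f) t z := by
  set F := uncurry f
  have hd : Differentiable ℝ F := hf.differentiable (by norm_num)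
  have hdd : Differentiable ℝ (fderiv ℝ F) :=
    (hf.fderiv_right (m := 1) (by norm_num)).differentiable (by norm_num)
  have hdir : ∀ v w, fderiv ℝ (fun p => fderiv ℝ F p v) (t, z) w
      = fderiv ℝ (fderiv ℝ F) (t, z) w v := fun v w => by
    simp [fderiv_clm_apply (hdd _) (differentiableAt_const v)]
  have eZ : uncurry (dZ2 f) = fun p => fderiv ℝ F p (0, 1) :=
    funext fun p => dZ2_eq_fderiv (hd p)
  have eT : uncurry (dT2 f) = fun p => fderiv ℝ F p (1, 0) :=
    funext fun p => dT2_eq_fderiv (hd p)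
  rw [dT2_eq_fderiv (eZ ▸ (hdd _).clm_apply (differentiableAt_const _)),
    dZ2_eq_fderiv (eT ▸ (hdd _).clm_apply (differentiableAt_const _)), eZ, eT, hdir, hdir]
  exact (hf.contDiffAt.isSymmSndFDerivAt (by simp)).eq _ _

theorem heat_dZ2 {D : ℝ} (hf : ContDiff ℝ 2 (uncurry f))
    (hheat : ∀ t z, dT2 f t z + D * dZ2 (dZ2 f) t z = 0) :
    ∀ t z, dT2 (dZ2 f) t z + D * dZ2 (dZ2 (dZ2 f)) t z = 0 := by
  intro t z
  have hT : dT2 f t = fun u => -D * dZ2 (dZ2 f) t u :=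
    funext fun u => by linarith [hheat t u]
  rw [dT2_dZ2_comm hf, dZ2, hT, deriv_const_mul_field']
  show -D * dZ2 (dZ2 (dZ2 f)) t z + D * dZ2 (dZ2 (dZ2 f)) t z = 0
  ring

end PartialDerivatives

theorem hasDerivAt_mul_sub_add_mul_sub_sq (p q T t : ℝ) :
    HasDerivAt (fun s => p * (T - s) + q * (T - s) ^ 2) (-p - 2 * q * (T - t)) t := by
  have hτ : HasDerivAt (fun s => T - s) (-1) t := (hasDerivAt_id t).const_sub T
  exact ((hτ.const_mul p).add ((hτ.pow 2).const_mul q)).congr_deriv (by push_cast; ring)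

def affineAnsatz (a ax ay b : ℝ → ℝ) (g h : ℝ → ℝ → ℝ) : R4 :=
  fun t x y z => (a t + ax t * x + ay t * y) * g t z + b t * h t z

section AffineAnsatz

variable {a ax ay b : ℝ → ℝ} {g h : ℝ → ℝ → ℝ}

theorem d4X_affineAnsatz : d4X (affineAnsatz a ax ay b g h) = affineAnsatz ax 0 0 0 g h := by
  funext t x y z
  simp [d4X, affineAnsatz]

theorem d4Y_affineAnsatz : d4Y (affineAnsatz a ax ay b g h) = affineAnsatz ay 0 0 0 g h := by
  funext t x y z
  simp [d4Y, affineAnsatz]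

theorem d4Z_affineAnsatz (hg : Differentiable ℝ (uncurry g))
    (hh : Differentiable ℝ (uncurry h)) :
    d4Z (affineAnsatz a ax ay b g h) = affineAnsatz a ax ay b (dZ2 g) (dZ2 h) := by
  funext t x y z
  exact (((hasDerivAt_dZ2 (hg (t, z))).const_mul _).add
    ((hasDerivAt_dZ2 (hh (t, z))).const_mul _)).deriv

theorem d4T_affineAnsatz {a' ax' ay' b' : ℝ → ℝ} (ha : ∀ t, HasDerivAt a (a' t) t)
    (hax : ∀ t, HasDerivAt ax (ax' t) t) (hay : ∀ t, HasDerivAt ay (ay' t) t)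
    (hb : ∀ t, HasDerivAt b (b' t) t)
    (hg : Differentiable ℝ (uncurry g)) (hh : Differentiable ℝ (uncurry h)) (t x y z : ℝ) :
    d4T (affineAnsatz a ax ay b g h) t x y z =
      (a' t + ax' t * x + ay' t * y) * g t z
        + (a t + ax t * x + ay t * y) * dT2 g t z + b' t * h t z + b t * dT2 h t z := by
  have hcoef : HasDerivAt (fun s => a s + ax s * x + ay s * y) (a' t + ax' t * x + ay' t * y) t :=
    ((ha t).add ((hax t).mul_const x)).add ((hay t).mul_const y)
  have hsum :=
    (hcoef.mul (hasDerivAt_dT2 (hg (t, z)))).add ((hb t).mul (hasDerivAt_dT2 (hh (t, z))))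
  exact hsum.deriv.trans (by ring)

end AffineAnsatz

/-- The explicit first-order correction `q¹` solves
`(∂_t + 𝒜₀ + 𝒞₀) q¹ + Q₁ = 0` with `q¹(T, ·) = 0`. -/
theorem first_order_term_solves_PDE
    (T lam0 lam10 lam01 μ0 σ0 β0 c0 ρ xbar ybar : ℝ)
    (q0 : ℝ → ℝ → ℝ)
    (hq0smooth : ContDiff ℝ (⊤ : ℕ∞) (fun p : ℝ × ℝ => q0 p.1 p.2))
    (hheat : ∀ t z, dT2 q0 t z + (1/2) * lam0^2 * dZ2 (dZ2 q0) t z = 0)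
    (A : ℝ → ℝ → ℝ → ℝ)
    (hA : ∀ t x y, A t x y =
      lam10 * ((x - xbar) + (1/2) * (T - t) * (μ0 - σ0^2/2))
      + lam01 * ((y - ybar) + (1/2) * (T - t) * c0))
    (B : ℝ) (hB : B = lam10 * μ0 + lam01 * ρ * β0 * lam0)
    (q1 : R4)
    (hq1 : ∀ t x y z, q1 t x y z =
      (T - t) * lam0 * A t x y * dZ2 q0 t z
      + (1/2) * (T - t)^2 * lam0 * B * dZ2 (dZ2 q0) t z)
    (Q1 : R4)
    (hQ1 : ∀ t x y z, Q1 t x y z =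
      (lam0 * lam10 * (x - xbar) + lam0 * lam01 * (y - ybar)) * dZ2 q0 t z) :
    (∀ t x y z : ℝ,
      d4T q1 t x y z
        + ((1/2) * σ0^2 * d4X (d4X q1) t x y z
            + ρ * σ0 * β0 * d4X (d4Y q1) t x y z
            + (1/2) * β0^2 * d4Y (d4Y q1) t x y z
            + (μ0 - σ0^2/2) * d4X q1 t x y z
            + c0 * d4Y q1 t x y z)
        + ((1/2) * lam0^2 * d4Z (d4Z q1) t x y z
            + ρ * β0 * lam0 * d4Y (d4Z q1) t x y z
            + μ0 * d4X (d4Z q1) t x y z)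
        + Q1 t x y z = 0) ∧
    (∀ x y z : ℝ, q1 T x y z = 0) := by
  have smooth₁ : ContDiff ℝ ∞ (uncurry (dZ2 q0)) :=
    ContDiff.uncurry_dZ2 (f := q0) hq0smooth (by simp)
  have smooth₂ : ContDiff ℝ ∞ (uncurry (dZ2 (dZ2 q0))) := smooth₁.uncurry_dZ2 (by simp)
  have smooth₃ : ContDiff ℝ ∞ (uncurry (dZ2 (dZ2 (dZ2 q0)))) :=
    smooth₂.uncurry_dZ2 (by simp)
  have heat₁ := heat_dZ2 (ContDiff.of_le (f := uncurry q0) hq0smooth (by norm_cast)) hheat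
  have heat₂ := heat_dZ2 (smooth₁.of_le (by norm_cast)) heat₁
  -- each coefficient has the shape `p (T - s) + q (T - s)²` of
  -- `hasDerivAt_mul_sub_add_mul_sub_sq`, hence the zero terms
  have hq1_eq : q1 = affineAnsatz
      (fun s => -(lam0 * (lam10 * xbar + lam01 * ybar)) * (T - s)
        + lam0 * (lam10 * (μ0 - σ0^2/2) + lam01 * c0) / 2 * (T - s) ^ 2)
      (fun s => lam0 * lam10 * (T - s) + 0 * (T - s) ^ 2)
      (fun s => lam0 * lam01 * (T - s) + 0 * (T - s) ^ 2)
      (fun s => 0 * (T - s) + lam0 * B / 2 * (T - s) ^ 2) (dZ2 q0) (dZ2 (dZ2 q0)) := by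
    funext t x y z
    rw [hq1, hA, affineAnsatz]
    ring
  subst hq1_eq
  refine ⟨fun t x y z => ?_, fun x y z => by simp [affineAnsatz]⟩
  have diff₁ := smooth₁.differentiable (by simp)
  have diff₂ := smooth₂.differentiable (by simp)
  rw [d4T_affineAnsatz (hasDerivAt_mul_sub_add_mul_sub_sq _ _ T)
    (hasDerivAt_mul_sub_add_mul_sub_sq _ _ T) (hasDerivAt_mul_sub_add_mul_sub_sq _ _ T)
    (hasDerivAt_mul_sub_add_mul_sub_sq _ _ T) diff₁ diff₂]
  simp only [d4X_affineAnsatz, d4Y_affineAnsatz, d4Z_affineAnsatz diff₁ diff₂,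
    d4Z_affineAnsatz diff₂ (smooth₃.differentiable (by simp)), affineAnsatz, Pi.zero_apply]
  rw [eq_neg_of_add_eq_zero_left (heat₁ t z), eq_neg_of_add_eq_zero_left (heat₂ t z), hQ1, hB]
  ring
end
end
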